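/- Let {A_n} be a sequence of n×n symmetric matrices with nonnegative entries and zeros on the diagonal satisfying (BD) and (MF), fix (β, B) ∈ Θ, and let X be an observation from P_{n,β,B}. With f_n(y) := (β/2) yᵀ A_n y + B Σ_{i=1}^n y_i for y ∈ [−1,1]^n and b_i(x) := tanh(β m_i(x) + B), one has limsup_{n→∞} (1/n²) E[ (f_n(X) − f_n(b(X)))² ] = 0, where E denotes expectation under P_{n,β,B}. -/

import Mathlib

/-!
Write `S(x) = f_n(x) - f_n(b(x))`. Since `f_n` is quadratic, `S(x) = ∑ᵢ cᵢ(x) (xᵢ - bᵢ(x))` with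
`cᵢ(x)` the `i`-th partial derivative of `f_n` at the midpoint of `x` and `b(x)`, so
`E[S²] = ∑ᵢ E[(Xᵢ - bᵢ(X)) cᵢ(X) S(X)]`. As `bᵢ(X) = E[Xᵢ | Xⱼ, j ≠ i]`, flipping the spin `Xᵢ`
reverses the sign of `(Xᵢ - bᵢ(X))` times the Gibbs weight, so the `i`-th summand is bounded by
the largest change of `cᵢ S` under that flip. Under (BD), `|S| = O(n)`, `|cᵢ| = O(1)`, and a flip
moves `S` by `O(1)` and `cᵢ` by `O(∑ₖ A_{ik}²)`. Hence `E[S²] = O(n ∑_{i,k} A_{ik}² + n)`, which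
is `o(n²)` by (MF).
-/

open Filter

noncomputable section

/-- Spin configuration in `{-1,1}^n` encoded by a Boolean vector. -/
def spinVec (n : ℕ) (σ : Fin n → Bool) : Fin n → ℝ := fun i => if σ i then 1 else -1

/-- Local field `m_i(x) = ∑_j A i j * x j`. -/
def mloc {n : ℕ} (A : Matrix (Fin n) (Fin n) ℝ) (x : Fin n → ℝ) (i : Fin n) : ℝ :=
  ∑ j, A i j * x j

/-- Average local field `m̄(x)`. -/
def mbar {n : ℕ} (A : Matrix (Fin n) (Fin n) ℝ) (x : Fin n → ℝ) : ℝ :=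
  (1 / (n : ℝ)) * ∑ i, mloc A x i

/-- `T_n(x) = (1/n) ∑_i (m_i(x) - m̄(x))²`. -/
def Tstat {n : ℕ} (A : Matrix (Fin n) (Fin n) ℝ) (x : Fin n → ℝ) : ℝ :=
  (1 / (n : ℝ)) * ∑ i, (mloc A x i - mbar A x) ^ 2

/-- Unnormalized Ising weight `exp((β/2) xᵀAx + B ∑ x_i)`. -/
def isingWt {n : ℕ} (A : Matrix (Fin n) (Fin n) ℝ) (β B : ℝ) (x : Fin n → ℝ) : ℝ :=
  Real.exp (β / 2 * ∑ i, ∑ j, A i j * x i * x j + B * ∑ i, x i)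

/-- Probability of the event `E` under the Ising measure `P_{n,β,B}`. -/
def isingProb {n : ℕ} (A : Matrix (Fin n) (Fin n) ℝ) (β B : ℝ) (E : Set (Fin n → ℝ)) : ℝ :=
  (∑ σ : Fin n → Bool, E.indicator (isingWt A β B) (spinVec n σ)) /
    (∑ σ : Fin n → Bool, isingWt A β B (spinVec n σ))

/-- Expectation of `f` under the Ising measure `P_{n,β,B}`. -/
def isingExp {n : ℕ} (A : Matrix (Fin n) (Fin n) ℝ) (β B : ℝ) (f : (Fin n → ℝ) → ℝ) : ℝ :=
  (∑ σ : Fin n → Bool, f (spinVec n σ) * isingWt A β B (spinVec n σ)) /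
    (∑ σ : Fin n → Bool, isingWt A β B (spinVec n σ))

/-- Pseudo-likelihood equation `Q_n(β,B|x)`. -/
def Qfun {n : ℕ} (A : Matrix (Fin n) (Fin n) ℝ) (β B : ℝ) (x : Fin n → ℝ) : ℝ :=
  ∑ i, mloc A x i * (x i - Real.tanh (β * mloc A x i + B))

/-- Pseudo-likelihood equation `R_n(β,B|x)`. -/
def Rfun {n : ℕ} (A : Matrix (Fin n) (Fin n) ℝ) (β B : ℝ) (x : Fin n → ℝ) : ℝ :=
  ∑ i, (x i - Real.tanh (β * mloc A x i + B))

/-- `b_i(x) = tanh(β m_i(x) + B)`. -/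
def bvec {n : ℕ} (A : Matrix (Fin n) (Fin n) ℝ) (β B : ℝ) (x : Fin n → ℝ) : Fin n → ℝ :=
  fun i => Real.tanh (β * mloc A x i + B)

/-- `f_n(y) = (β/2) yᵀAy + B ∑ y_i`. -/
def fN {n : ℕ} (A : Matrix (Fin n) (Fin n) ℝ) (β B : ℝ) (y : Fin n → ℝ) : ℝ :=
  β / 2 * ∑ i, ∑ j, A i j * y i * y j + B * ∑ i, y i

/-- Entropy term `I(y)` (with `0 log 0 = 0`, as `Real.log 0 = 0`). -/
def entI {n : ℕ} (y : Fin n → ℝ) : ℝ :=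
  ∑ i, ((1 + y i) / 2 * Real.log ((1 + y i) / 2) + (1 - y i) / 2 * Real.log ((1 - y i) / 2))

open Finset Function Real

namespace Real

theorem hasDerivAt_tanh (x : ℝ) : HasDerivAt tanh (1 / cosh x ^ 2) x := by
  have h := (hasDerivAt_sinh x).div (hasDerivAt_cosh x) (cosh_pos x).ne'
  rw [show tanh = sinh / cosh from funext tanh_eq_sinh_div_cosh]
  refine h.congr_deriv ?_
  rw [← cosh_sq_sub_sinh_sq x]
  ring

theorem lipschitzWith_tanh : LipschitzWith 1 tanh :=
  lipschitzWith_of_nnnorm_deriv_le (fun x => (hasDerivAt_tanh x).differentiableAt) fun x => by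
    rw [(hasDerivAt_tanh x).deriv, ← NNReal.coe_le_coe, coe_nnnorm, norm_of_nonneg (by positivity)]
    exact div_le_one_of_le₀ (one_le_pow₀ (one_le_cosh x)) (by positivity)

theorem abs_tanh_sub_tanh_le (a b : ℝ) : |tanh a - tanh b| ≤ |a - b| := by
  simpa [dist_eq] using lipschitzWith_tanh.dist_le_mul a b

theorem one_add_tanh_mul_exp (θ : ℝ) : (1 + tanh θ) * exp (-(2 * θ)) = 1 - tanh θ := by
  have hprod : exp θ * exp (-θ) = 1 := by rw [← exp_add]; simp
  rw [tanh_eq, show -(2 * θ) = -θ + -θ by ring, exp_add]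
  field_simp
  linear_combination (2 * exp (-θ)) * hprod

end Real

section SingleSite

variable {n : ℕ} (A : Matrix (Fin n) (Fin n) ℝ) (β B : ℝ)

theorem mloc_update (x : Fin n → ℝ) (i j : Fin n) (t : ℝ) :
    mloc A (update x i t) j = mloc A x j + A j i * (t - x i) := by
  have hx : update x i t = x + Pi.single i (t - x i) := by
    ext k; rcases eq_or_ne k i with rfl | hk <;> simp [*]
  simp [mloc, hx, mul_add, sum_add_distrib, Pi.single_apply]

theorem abs_mloc_le {x : Fin n → ℝ} (hx : ∀ j, |x j| ≤ 1) (i : Fin n) :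
    |mloc A x i| ≤ ∑ j, |A i j| :=
  (abs_sum_le_sum_abs _ _).trans <| sum_le_sum fun j _ => by
    rw [abs_mul]; exact mul_le_of_le_one_right (abs_nonneg _) (hx j)

theorem abs_bvec_le_one (x : Fin n → ℝ) (i : Fin n) : |bvec A β B x i| ≤ 1 :=
  (abs_tanh_lt_one _).le

theorem abs_sub_bvec_le_two {x : Fin n → ℝ} (hx : ∀ j, |x j| ≤ 1) (i : Fin n) :
    |x i - bvec A β B x i| ≤ 2 :=
  (abs_sub _ _).trans (by linarith [hx i, abs_bvec_le_one A β B x i])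

theorem abs_bvec_update_sub_le (x : Fin n → ℝ) (i j : Fin n) (t : ℝ) :
    |bvec A β B (update x i t) j - bvec A β B x j| ≤ |β| * |A j i| * |t - x i| := by
  refine (abs_tanh_sub_tanh_le _ _).trans_eq ?_
  rw [mloc_update, ← abs_mul, ← abs_mul]
  ring_nf

end SingleSite

section QuadraticForm

variable {n : ℕ} (A : Matrix (Fin n) (Fin n) ℝ) (β B : ℝ)

-- `∂ᵢ fN` at the midpoint `(y + z) / 2`
def fNSlope (y z : Fin n → ℝ) (i : Fin n) : ℝ :=
  β / 2 * (mloc A y i + mloc A z i) + B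

theorem sum_mloc_mul (u v : Fin n → ℝ) :
    ∑ i, mloc A u i * v i = ∑ i, ∑ j, A i j * v i * u j :=
  sum_congr rfl fun i _ => by
    rw [mloc, sum_mul]
    exact sum_congr rfl fun j _ => by ring

theorem fN_sub_fN (hsymm : A.IsSymm) (y z : Fin n → ℝ) :
    fN A β B y - fN A β B z = ∑ i, fNSlope A β B y z i * (y i - z i) := by
  have cross : ∑ i, ∑ j, A i j * y i * z j = ∑ i, ∑ j, A i j * z i * y j := by
    rw [sum_comm]
    refine sum_congr rfl fun i _ => sum_congr rfl fun j _ => ?_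
    rw [hsymm.apply]
    ring
  have expand : ∑ i, fNSlope A β B y z i * (y i - z i) =
      β / 2 * (∑ i, mloc A y i * y i - ∑ i, mloc A y i * z i + ∑ i, mloc A z i * y i
        - ∑ i, mloc A z i * z i) + B * (∑ i, y i - ∑ i, z i) := by
    simp only [fNSlope, mul_sum, ← sum_sub_distrib, ← sum_add_distrib]
    exact sum_congr rfl fun i _ => by ring
  rw [expand, sum_mloc_mul, sum_mloc_mul, sum_mloc_mul, sum_mloc_mul, fN, fN]
  linear_combination (-(β / 2)) * cross

theorem fN_update_sub (hsymm : A.IsSymm) (hdiag : ∀ i, A i i = 0) (x : Fin n → ℝ) (i : Fin n)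
    (t : ℝ) : fN A β B (update x i t) - fN A β B x = (β * mloc A x i + B) * (t - x i) := by
  rw [fN_sub_fN A β B hsymm, sum_eq_single i (fun j _ hj => by simp [hj]) (by simp)]
  simp only [fNSlope, mloc_update, hdiag, update_self]
  ring

variable {γ : ℝ} (hγ : ∀ i, ∑ j, |A i j| ≤ γ)
include hγ

theorem abs_fNSlope_le {y z : Fin n → ℝ} (hy : ∀ j, |y j| ≤ 1) (hz : ∀ j, |z j| ≤ 1) (i : Fin n) :
    |fNSlope A β B y z i| ≤ |β| * γ + |B| := by
  have hm : |mloc A y i + mloc A z i| ≤ 2 * γ :=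
    (abs_add_le (mloc A y i) (mloc A z i)).trans <| by
      linarith [abs_mloc_le A hy i, abs_mloc_le A hz i, hγ i]
  calc |fNSlope A β B y z i| ≤ |β| / 2 * |mloc A y i + mloc A z i| + |B| := by
        rw [fNSlope]
        refine (abs_add_le _ _).trans_eq ?_
        rw [abs_mul, abs_div, abs_two]
    _ ≤ |β| / 2 * (2 * γ) + |B| := by gcongr
    _ = |β| * γ + |B| := by ring

theorem abs_fN_sub_fN_le (hsymm : A.IsSymm) {y z : Fin n → ℝ} (hy : ∀ j, |y j| ≤ 1)
    (hz : ∀ j, |z j| ≤ 1) : |fN A β B y - fN A β B z| ≤ (|β| * γ + |B|) * ∑ i, |y i - z i| := by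
  rw [fN_sub_fN A β B hsymm, mul_sum]
  refine (abs_sum_le_sum_abs _ _).trans (sum_le_sum fun i _ => ?_)
  rw [abs_mul]
  exact mul_le_mul_of_nonneg_right (abs_fNSlope_le A β B hγ hy hz i) (abs_nonneg _)

end QuadraticForm

section Gap

variable {n : ℕ} (A : Matrix (Fin n) (Fin n) ℝ) (β B : ℝ)

def fNGap (x : Fin n → ℝ) : ℝ := fN A β B x - fN A β B (bvec A β B x)

theorem abs_fNSlope_bvec_update_sub_le (hsymm : A.IsSymm) (hdiag : ∀ i, A i i = 0)
    (x : Fin n → ℝ) (i : Fin n) (t : ℝ) :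
    |fNSlope A β B (update x i t) (bvec A β B (update x i t)) i
        - fNSlope A β B x (bvec A β B x) i| ≤ β ^ 2 / 2 * |t - x i| * ∑ k, A i k ^ 2 := by
  have hdiff : fNSlope A β B (update x i t) (bvec A β B (update x i t)) i
      - fNSlope A β B x (bvec A β B x) i
      = β / 2 * ∑ k, A i k * (bvec A β B (update x i t) k - bvec A β B x k) := by
    rw [fNSlope, fNSlope, mloc_update, hdiag]
    simp only [mloc, mul_sub, sum_sub_distrib]
    ring
  rw [hdiff, abs_mul, abs_div, abs_two]
  calc |β| / 2 * |∑ k, A i k * (bvec A β B (update x i t) k - bvec A β B x k)|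
      ≤ |β| / 2 * ∑ k, |A i k| * (|β| * |A k i| * |t - x i|) := by
        gcongr
        refine (abs_sum_le_sum_abs _ _).trans (sum_le_sum fun k _ => ?_)
        rw [abs_mul]
        exact mul_le_mul_of_nonneg_left (abs_bvec_update_sub_le A β B x i k t) (abs_nonneg _)
    _ = β ^ 2 / 2 * |t - x i| * ∑ k, A i k ^ 2 := by
        simp only [hsymm.apply, mul_sum, ← sq_abs β, ← sq_abs (A i _)]
        exact sum_congr rfl fun k _ => by ring

variable {γ : ℝ} (hγ : ∀ i, ∑ j, |A i j| ≤ γ)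
include hγ

theorem abs_fNGap_le (hsymm : A.IsSymm) {x : Fin n → ℝ} (hx : ∀ j, |x j| ≤ 1) :
    |fNGap A β B x| ≤ 2 * (|β| * γ + |B|) * n := by
  rw [fNGap, fN_sub_fN A β B hsymm]
  calc |∑ i, fNSlope A β B x (bvec A β B x) i * (x i - bvec A β B x i)|
      ≤ ∑ _i : Fin n, (|β| * γ + |B|) * 2 := by
        refine (abs_sum_le_sum_abs _ _).trans (sum_le_sum fun i _ => ?_)
        have hslope := abs_fNSlope_le A β B hγ hx (abs_bvec_le_one A β B x) i
        rw [abs_mul]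
        exact mul_le_mul hslope (abs_sub_bvec_le_two A β B hx i) (abs_nonneg _)
          ((abs_nonneg _).trans hslope)
    _ = 2 * (|β| * γ + |B|) * n := by simp; ring

theorem abs_fNGap_update_sub_le (hsymm : A.IsSymm) (hdiag : ∀ i, A i i = 0) {x : Fin n → ℝ}
    (hx : ∀ j, |x j| ≤ 1) (i : Fin n) (t : ℝ) :
    |fNGap A β B (update x i t) - fNGap A β B x|
      ≤ (|β| * γ + |B|) * (1 + |β| * γ) * |t - x i| := by
  set K := |β| * γ + |B|
  have hslope : |β * mloc A x i + B| ≤ K := by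
    simpa [fNSlope, ← two_mul, ← mul_assoc] using abs_fNSlope_le A β B hγ hx hx i
  have hK : 0 ≤ K := (abs_nonneg _).trans hslope
  have hcol : ∑ j, |A j i| ≤ γ := by simpa only [hsymm.apply] using hγ i
  have hspin : |fN A β B (update x i t) - fN A β B x| ≤ K * |t - x i| := by
    rw [fN_update_sub A β B hsymm hdiag, abs_mul]
    exact mul_le_mul_of_nonneg_right hslope (abs_nonneg _)
  have hmean : |fN A β B (bvec A β B (update x i t)) - fN A β B (bvec A β B x)|
      ≤ K * (|β| * γ * |t - x i|) := by
    refine (abs_fN_sub_fN_le A β B hγ hsymm (abs_bvec_le_one A β B _)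
      (abs_bvec_le_one A β B _)).trans (mul_le_mul_of_nonneg_left ?_ hK)
    calc ∑ j, |bvec A β B (update x i t) j - bvec A β B x j|
        ≤ ∑ j, |β| * |A j i| * |t - x i| :=
          sum_le_sum fun j _ => abs_bvec_update_sub_le A β B x i j t
      _ = |β| * (∑ j, |A j i|) * |t - x i| := by rw [← sum_mul, ← mul_sum]
      _ ≤ |β| * γ * |t - x i| := by gcongr
  calc |fNGap A β B (update x i t) - fNGap A β B x|
      = |(fN A β B (update x i t) - fN A β B x)
          - (fN A β B (bvec A β B (update x i t)) - fN A β B (bvec A β B x))| := by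
        rw [fNGap, fNGap]; ring_nf
    _ ≤ K * |t - x i| + K * (|β| * γ * |t - x i|) := (abs_sub _ _).trans (add_le_add hspin hmean)
    _ = K * (1 + |β| * γ) * |t - x i| := by ring

theorem abs_fNSlope_mul_fNGap_flip_sub_le (hsymm : A.IsSymm) (hdiag : ∀ i, A i i = 0)
    {x : Fin n → ℝ} (hx : ∀ j, |x j| ≤ 1) (i : Fin n) :
    let G := fun y => fNSlope A β B y (bvec A β B y) i * fNGap A β B y
    |G (update x i (-x i)) - G x|
      ≤ 2 * (|β| * γ + |B|) * β ^ 2 * n * ∑ k, A i k ^ 2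
        + 2 * (|β| * γ + |B|) ^ 2 * (1 + |β| * γ) := by
  intro G
  set K := |β| * γ + |B|
  set x' := update x i (-x i)
  have hγ0 : 0 ≤ γ := (sum_nonneg fun j _ => abs_nonneg _).trans (hγ i)
  have hx' : ∀ j, |x' j| ≤ 1 := by
    intro j
    rcases eq_or_ne j i with rfl | hj
    · simpa [x'] using hx j
    · simpa [x', hj] using hx j
  have hflip : |-x i - x i| ≤ 2 := by
    rw [abs_le]; constructor <;> linarith [abs_le.mp (hx i)]
  have hslope : |fNSlope A β B x' (bvec A β B x') i - fNSlope A β B x (bvec A β B x) i|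
      ≤ β ^ 2 * ∑ k, A i k ^ 2 :=
    calc _ ≤ β ^ 2 / 2 * |-x i - x i| * ∑ k, A i k ^ 2 :=
          abs_fNSlope_bvec_update_sub_le A β B hsymm hdiag x i _
      _ ≤ β ^ 2 / 2 * 2 * ∑ k, A i k ^ 2 := by gcongr
      _ = β ^ 2 * ∑ k, A i k ^ 2 := by ring
  have hgap : |fNGap A β B x' - fNGap A β B x| ≤ K * (1 + |β| * γ) * 2 :=
    (abs_fNGap_update_sub_le A β B hγ hsymm hdiag hx i _).trans (by gcongr)
  calc |G x' - G x|
      = |(fNSlope A β B x' (bvec A β B x') i - fNSlope A β B x (bvec A β B x) i)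
            * fNGap A β B x'
          + fNSlope A β B x (bvec A β B x) i * (fNGap A β B x' - fNGap A β B x)| := by
        simp only [G]; ring_nf
    _ ≤ β ^ 2 * (∑ k, A i k ^ 2) * (2 * K * n) + K * (K * (1 + |β| * γ) * 2) := by
        refine (abs_add_le _ _).trans (add_le_add ?_ ?_) <;> rw [abs_mul]
        · exact mul_le_mul hslope (abs_fNGap_le A β B hγ hsymm hx') (abs_nonneg _) (by positivity)
        · exact mul_le_mul (abs_fNSlope_le A β B hγ hx (abs_bvec_le_one A β B x) i) hgap
            (abs_nonneg _) (by positivity)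
    _ = _ := by ring

end Gap

section IsingMeasure

variable {n : ℕ} (A : Matrix (Fin n) (Fin n) ℝ) (β B : ℝ)

theorem spinVec_eq_one_or_neg_one (σ : Fin n → Bool) (j : Fin n) :
    spinVec n σ j = 1 ∨ spinVec n σ j = -1 := by
  unfold spinVec; split <;> simp

theorem abs_spinVec_le_one (σ : Fin n → Bool) (j : Fin n) : |spinVec n σ j| ≤ 1 := by
  rcases spinVec_eq_one_or_neg_one σ j with h | h <;> simp [h]

def flipAt (i : Fin n) : Equiv.Perm (Fin n → Bool) :=
  Involutive.toPerm (fun σ => update σ i !σ i) fun σ => by simp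

theorem flipAt_apply (i : Fin n) (σ : Fin n → Bool) : flipAt i σ = update σ i !σ i := rfl

theorem spinVec_flipAt (i : Fin n) (σ : Fin n → Bool) :
    spinVec n (flipAt i σ) = update (spinVec n σ) i (-spinVec n σ i) := by
  ext j
  rcases eq_or_ne j i with rfl | hj
  · cases h : σ j <;> simp [spinVec, flipAt_apply, h]
  · simp [spinVec, flipAt_apply, hj]

theorem isingWt_eq_exp_fN (x : Fin n → ℝ) : isingWt A β B x = exp (fN A β B x) := rfl

theorem isingWt_pos (x : Fin n → ℝ) : 0 < isingWt A β B x := exp_pos _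

theorem isingWt_update (hsymm : A.IsSymm) (hdiag : ∀ i, A i i = 0) (x : Fin n → ℝ) (i : Fin n)
    (t : ℝ) : isingWt A β B (update x i t)
      = exp ((β * mloc A x i + B) * (t - x i)) * isingWt A β B x := by
  rw [← fN_update_sub A β B hsymm hdiag, isingWt_eq_exp_fN, isingWt_eq_exp_fN, ← exp_add,
    sub_add_cancel]

theorem residual_mul_isingWt_update_neg (hsymm : A.IsSymm) (hdiag : ∀ i, A i i = 0)
    {x : Fin n → ℝ} {i : Fin n} (hx : x i = 1 ∨ x i = -1) :
    (-x i - bvec A β B (update x i (-x i)) i) * isingWt A β B (update x i (-x i))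
      = -((x i - bvec A β B x i) * isingWt A β B x) := by
  have hb : bvec A β B (update x i (-x i)) i = tanh (β * mloc A x i + B) := by
    simp [bvec, mloc_update, hdiag]
  rw [hb, isingWt_update A β B hsymm hdiag, bvec]
  set θ := β * mloc A x i + B
  rcases hx with h | h <;> rw [h]
  · rw [show θ * (-1 - 1) = -(2 * θ) by ring]
    linear_combination -isingWt A β B x * one_add_tanh_mul_exp θ
  · have key := one_add_tanh_mul_exp (-θ)
    rw [tanh_neg, show -(2 * -θ) = θ * (- -1 - -1) by ring] at key
    linear_combination isingWt A β B x * key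

theorem isingExp_nonneg {f : (Fin n → ℝ) → ℝ} (hf : ∀ σ, 0 ≤ f (spinVec n σ)) :
    0 ≤ isingExp A β B f :=
  div_nonneg (sum_nonneg fun σ _ => mul_nonneg (hf σ) (isingWt_pos A β B _).le)
    (sum_nonneg fun _ _ => (isingWt_pos A β B _).le)

theorem isingExp_sub (f g : (Fin n → ℝ) → ℝ) :
    isingExp A β B (fun x => f x - g x) = isingExp A β B f - isingExp A β B g := by
  simp only [isingExp, sub_mul, sum_sub_distrib, sub_div]

theorem isingExp_sum {ι : Type*} (s : Finset ι) (f : ι → (Fin n → ℝ) → ℝ) :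
    isingExp A β B (fun x => ∑ i ∈ s, f i x) = ∑ i ∈ s, isingExp A β B (f i) := by
  simp only [isingExp, sum_mul, ← sum_div]
  rw [sum_comm]

theorem abs_isingExp_le {f : (Fin n → ℝ) → ℝ} {D : ℝ} (hf : ∀ σ, |f (spinVec n σ)| ≤ D) :
    |isingExp A β B f| ≤ D := by
  have hZ : 0 < ∑ σ : Fin n → Bool, isingWt A β B (spinVec n σ) :=
    sum_pos (fun σ _ => isingWt_pos A β B _) univ_nonempty
  rw [isingExp, abs_div, abs_of_pos hZ, div_le_iff₀ hZ, mul_sum]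
  refine (abs_sum_le_sum_abs _ _).trans (sum_le_sum fun σ _ => ?_)
  rw [abs_mul, abs_of_pos (isingWt_pos A β B _)]
  exact mul_le_mul_of_nonneg_right (hf σ) (isingWt_pos A β B _).le

theorem isingExp_residual_mul_flip (hsymm : A.IsSymm) (hdiag : ∀ i, A i i = 0) (i : Fin n)
    (G : (Fin n → ℝ) → ℝ) :
    isingExp A β B (fun x => (x i - bvec A β B x i) * G (update x i (-x i)))
      = -isingExp A β B (fun x => (x i - bvec A β B x i) * G x) := by
  rw [isingExp, isingExp, ← neg_div, ← sum_neg_distrib]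
  congr 1
  refine (Equiv.sum_comp (flipAt i) _).symm.trans (sum_congr rfl fun σ _ => ?_)
  rw [spinVec_flipAt, update_idem, update_self, neg_neg, update_eq_self]
  linear_combination G (spinVec n σ)
    * residual_mul_isingWt_update_neg A β B hsymm hdiag (spinVec_eq_one_or_neg_one σ i)

theorem abs_isingExp_residual_mul_le (hsymm : A.IsSymm) (hdiag : ∀ i, A i i = 0) (i : Fin n)
    (G : (Fin n → ℝ) → ℝ) {D : ℝ}
    (hG : ∀ x : Fin n → ℝ, (∀ j, |x j| ≤ 1) → |G (update x i (-x i)) - G x| ≤ D) :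
    |isingExp A β B (fun x => (x i - bvec A β B x i) * G x)| ≤ D := by
  have hhalf : isingExp A β B (fun x => (x i - bvec A β B x i) * G x)
      = -(1 / 2) * isingExp A β B
          (fun x => (x i - bvec A β B x i) * (G (update x i (-x i)) - G x)) := by
    simp only [mul_sub]
    rw [isingExp_sub, isingExp_residual_mul_flip A β B hsymm hdiag]
    ring
  have hbound :
      |isingExp A β B (fun x => (x i - bvec A β B x i) * (G (update x i (-x i)) - G x))| ≤ 2 * D :=
    abs_isingExp_le A β B fun σ => by
      rw [abs_mul]
      exact mul_le_mul (abs_sub_bvec_le_two A β B (abs_spinVec_le_one σ) i)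
        (hG _ (abs_spinVec_le_one σ)) (abs_nonneg _) zero_le_two
  rw [hhalf, abs_mul, abs_neg, abs_of_pos one_half_pos]
  linarith

theorem isingExp_fNGap_sq_le (hsymm : A.IsSymm) (hdiag : ∀ i, A i i = 0) {γ : ℝ}
    (hγ : ∀ i, ∑ j, |A i j| ≤ γ) :
    isingExp A β B (fun x => fNGap A β B x ^ 2)
      ≤ n * (2 * (|β| * γ + |B|) * β ^ 2 * ∑ i, ∑ k, A i k ^ 2
        + 2 * (|β| * γ + |B|) ^ 2 * (1 + |β| * γ)) := by
  have hsq : (fun x => fNGap A β B x ^ 2) = fun x =>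
      ∑ i, (x i - bvec A β B x i) * (fNSlope A β B x (bvec A β B x) i * fNGap A β B x) := by
    funext x
    rw [sq]
    nth_rewrite 1 [fNGap, fN_sub_fN A β B hsymm]
    rw [sum_mul]
    exact sum_congr rfl fun i _ => by ring
  rw [hsq, isingExp_sum]
  calc _ ≤ ∑ i, (2 * (|β| * γ + |B|) * β ^ 2 * n * ∑ k, A i k ^ 2
        + 2 * (|β| * γ + |B|) ^ 2 * (1 + |β| * γ)) :=
        sum_le_sum fun i _ => (le_abs_self _).trans <|
          abs_isingExp_residual_mul_le A β B hsymm hdiag i _ fun x hx =>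
            abs_fNSlope_mul_fNGap_flip_sub_le A β B hγ hsymm hdiag hx i
    _ = _ := by
        rw [sum_add_distrib, ← mul_sum, sum_const, card_univ, Fintype.card_fin, nsmul_eq_mul]
        ring

end IsingMeasure

theorem stmt11_general (A : (n : ℕ) → Matrix (Fin n) (Fin n) ℝ)
    (hsymm : ∀ n, (A n).IsSymm)
    (hnonneg : ∀ n, ∀ i j : Fin n, 0 ≤ A n i j)
    (hdiag : ∀ n, ∀ i : Fin n, A n i i = 0)
    (hBD : ∃ γ : ℝ, ∀ n, ∀ i : Fin n, (∑ j, A n i j) ≤ γ)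
    (hMF : Tendsto (fun n : ℕ => (1 / (n : ℝ)) * ∑ i, ∑ j, (A n i j) ^ 2) atTop (nhds 0))
    (β B : ℝ) :
    limsup (fun n : ℕ => (1 / (n : ℝ) ^ 2) * isingExp (A n) β B
      (fun x => (fN (A n) β B x - fN (A n) β B (bvec (A n) β B x)) ^ 2)) atTop = 0 := by
  obtain ⟨γ, hγ⟩ := hBD
  have hγ' : ∀ n, ∀ i : Fin n, ∑ j, |A n i j| ≤ γ := fun n i =>
    (sum_congr rfl fun j _ => abs_of_nonneg (hnonneg n i j)).trans_le (hγ n i)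
  set K := |β| * γ + |B|
  set C := 2 * K ^ 2 * (1 + |β| * γ)
  have hbound : ∀ n : ℕ, (1 / (n : ℝ) ^ 2) * isingExp (A n) β B (fun x => fNGap (A n) β B x ^ 2)
      ≤ 2 * K * β ^ 2 * ((1 / (n : ℝ)) * ∑ i, ∑ j, (A n i j) ^ 2) + C * (1 / (n : ℝ)) := by
    intro n
    refine (mul_le_mul_of_nonneg_left
      (isingExp_fNGap_sq_le (A n) β B (hsymm n) (hdiag n) (hγ' n)) (by positivity)).trans_eq ?_
    rcases eq_or_ne (n : ℝ) 0 with hn | hn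
    · simp [hn]
    · field_simp
      ring
  have hlim : Tendsto (fun n : ℕ => 2 * K * β ^ 2 * ((1 / (n : ℝ)) * ∑ i, ∑ j, (A n i j) ^ 2)
      + C * (1 / (n : ℝ))) atTop (nhds 0) := by
    simpa using (hMF.const_mul _).add (tendsto_one_div_atTop_nhds_zero_nat.const_mul C)
  exact (squeeze_zero (fun n => mul_nonneg (by positivity)
    (isingExp_nonneg _ β B fun σ => sq_nonneg _)) hbound hlim).limsup_eq

/-- `limsup (1/n²) E[(f_n(X) - f_n(b(X)))²] = 0`. -/
theorem stmt11 (A : (n : ℕ) → Matrix (Fin n) (Fin n) ℝ)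
    (hsymm : ∀ n, (A n).IsSymm)
    (hnonneg : ∀ n, ∀ i j : Fin n, 0 ≤ A n i j)
    (hdiag : ∀ n, ∀ i : Fin n, A n i i = 0)
    (hBD : ∃ γ : ℝ, ∀ n, ∀ i : Fin n, (∑ j, A n i j) ≤ γ)
    (hMF : Tendsto (fun n : ℕ => (1 / (n : ℝ)) * ∑ i, ∑ j, (A n i j) ^ 2) atTop (nhds 0))
    (β B : ℝ) (hβ : 0 < β) (hB : B ≠ 0) :
    limsup (fun n : ℕ => (1 / (n : ℝ) ^ 2) * isingExp (A n) β B
      (fun x => (fN (A n) β B x - fN (A n) β B (bvec (A n) β B x)) ^ 2)) atTop = 0 :=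
  stmt11_general A hsymm hnonneg hdiag hBD hMF β B
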